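/- arXiv:1503.02629 — 7 statements merged into one kernel-verified Lean document; each statement's English description precedes it below -/
import Mathlib

section
/- Let a, λ > 0 with aλ ≤ 1, and let u_{j-1}, u_j, u_{j+1} be reals with u_{j+1} ≠ u_j. Define θ = (u_j - u_{j-1})/(u_{j+1} - u_j). If θ ≤ -1 or θ ≥ aλ/(2 - aλ), then the FTCS update v = u_j - (aλ/2)(u_{j+1} - u_{j-1}) lies between u_{j-1} and u_j, i.e. min(u_{j-1},u_j) ≤ v ≤ max(u_{j-1},u_j). -/
theorem ftcs_stable_region_pos_speed
    (a l ujm uj ujp : ℝ) (ha : 0 < a) (hl : 0 < l) (hcfl : a * l ≤ 1)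
    (hne : ujp ≠ uj)
    (hθ : (uj - ujm) / (ujp - uj) ≤ -1 ∨
          (uj - ujm) / (ujp - uj) ≥ a * l / (2 - a * l)) :
    min ujm uj ≤ uj - (a * l / 2) * (ujp - ujm) ∧
      uj - (a * l / 2) * (ujp - ujm) ≤ max ujm uj := by
  have hal : 0 < a * l := mul_pos ha hl
  have h2 : 0 < 2 - a * l := by linarith
  have hd := sub_ne_zero.mpr hne
  rcases hd.lt_or_gt with hdn | hdp
  · rcases hθ with h | h
    · rw [div_le_iff_of_neg hdn] at h
      constructor
      · rw [min_le_iff]; left; nlinarith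
      · rw [le_max_iff]; right; nlinarith
    · rw [ge_iff_le, le_div_iff_of_neg hdn, div_mul_eq_mul_div, le_div_iff₀ h2] at h
      constructor
      · rw [min_le_iff]; right; nlinarith
      · rw [le_max_iff]; left; nlinarith
  · rcases hθ with h | h
    · rw [div_le_iff₀ hdp] at h
      constructor
      · rw [min_le_iff]; right; nlinarith
      · rw [le_max_iff]; left; nlinarith
    · rw [ge_iff_le, div_le_div_iff₀ h2 hdp] at h
      constructor
      · rw [min_le_iff]; left; nlinarith
      · rw [le_max_iff]; right; nlinarith
end

section
/- Let a < 0, λ > 0 with |a|λ ≤ 1, and let u_{j-1}, u_j, u_{j+1} be reals with u_j ≠ u_{j-1}. Define θ = (u_{j+1} - u_j)/(u_j - u_{j-1}). If θ ≤ -1 or θ ≥ -aλ/(2 + aλ), then the FTCS update v = u_j - (aλ/2)(u_{j+1} - u_{j-1}) lies between u_j and u_{j+1}, i.e. min(u_j,u_{j+1}) ≤ v ≤ max(u_j,u_{j+1}). -/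
theorem ftcs_stable_region_neg_speed
    (a l ujm uj ujp : ℝ) (ha : a < 0) (hl : 0 < l) (hcfl : |a| * l ≤ 1)
    (hne : uj ≠ ujm)
    (hθ : (ujp - uj) / (uj - ujm) ≤ -1 ∨
          (ujp - uj) / (uj - ujm) ≥ -(a * l) / (2 + a * l)) :
    min uj ujp ≤ uj - (a * l / 2) * (ujp - ujm) ∧
      uj - (a * l / 2) * (ujp - ujm) ≤ max uj ujp := by
  have hal : a * l < 0 := mul_neg_of_neg_of_pos ha hl
  have hal2 : -1 ≤ a * l := by
    have h := hcfl
    rw [abs_of_neg ha] at h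
    nlinarith
  have h2 : (0:ℝ) < 2 + a * l := by linarith
  have hd : uj - ujm ≠ 0 := sub_ne_zero.mpr hne
  set θ := (ujp - uj) / (uj - ujm) with hθdef
  have hp : ujp - uj = θ * (uj - ujm) := (div_mul_cancel₀ _ hd).symm
  have hθ' : θ ≤ -1 ∨ 0 ≤ θ * (2 + a * l) + a * l := by
    rcases hθ with h | h
    · exact Or.inl h
    · right
      rw [ge_iff_le, div_le_iff₀ h2] at h
      linarith
  rcases hd.lt_or_gt with hdn | hdp
  · rcases hθ' with h | h
    · have k1 : (0:ℝ) ≤ (-(θ + 1)) * (ujm - uj) :=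
        mul_nonneg (by linarith) (by linarith)
      have k2 : (0:ℝ) ≤ (-(a * l)) * ((-(θ + 1)) * (ujm - uj)) :=
        mul_nonneg (by linarith) k1
      have k3 : (0:ℝ) ≤ (a * l + 1) * ((-(θ + 1)) * (ujm - uj)) :=
        mul_nonneg (by linarith) k1
      constructor <;> rcases le_total uj ujp with hc | hc <;>
        simp [min_eq_left, min_eq_right, max_eq_left, max_eq_right, hc] <;>
        nlinarith [hp, k1, k2, k3]
    · have fd : (θ * (2 + a * l) + a * l) * (uj - ujm) ≤ 0 :=
        mul_nonpos_of_nonneg_of_nonpos h hdn.le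
      constructor <;> rcases le_total uj ujp with hc | hc <;>
        simp [min_eq_left, min_eq_right, max_eq_left, max_eq_right, hc] <;>
        nlinarith [hp, fd]
  · rcases hθ' with h | h
    · have k1 : (0:ℝ) ≤ (-(θ + 1)) * (uj - ujm) :=
        mul_nonneg (by linarith) hdp.le
      have k2 : (0:ℝ) ≤ (-(a * l)) * ((-(θ + 1)) * (uj - ujm)) :=
        mul_nonneg (by linarith) k1
      have k3 : (0:ℝ) ≤ (a * l + 1) * ((-(θ + 1)) * (uj - ujm)) :=
        mul_nonneg (by linarith) k1
      constructor <;> rcases le_total uj ujp with hc | hc <;>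
        simp [min_eq_left, min_eq_right, max_eq_left, max_eq_right, hc] <;>
        nlinarith [hp, k1, k2, k3]
    · have fd : (0:ℝ) ≤ (θ * (2 + a * l) + a * l) * (uj - ujm) :=
        mul_nonneg h hdp.le
      constructor <;> rcases le_total uj ujp with hc | hc <;>
        simp [min_eq_left, min_eq_right, max_eq_left, max_eq_right, hc] <;>
        nlinarith [hp, fd]
end

section
/- Let C ∈ (0,1] and let u_{j-1}, u_j, u_{j+1} be reals with u_{j+1} ≠ u_j and (u_j - u_{j-1})/(u_{j+1} - u_j) ∈ (-1, C/(2-C)). Then at least one of the coefficients α = 1 - (C/2)((u_{j+1}-u_j)/(u_j-u_{j-1}) + 1), β = (C/2)((u_{j+1}-u_j)/(u_j-u_{j-1}) + 1) is negative (when u_j ≠ u_{j-1}), and if u_j = u_{j-1} then the FTCS update v = u_j - (C/2)(u_{j+1} - u_{j-1}) satisfies v ∉ [min(u_{j-1},u_j), max(u_{j-1},u_j)] unless u_{j+1} = u_j. -/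
theorem ftcs_oscillatory_region
    (C ujm uj ujp : ℝ) (hC : C ∈ Set.Ioc (0:ℝ) 1) (hne : ujp ≠ uj)
    (hθ : (uj - ujm) / (ujp - uj) ∈ Set.Ioo (-1 : ℝ) (C / (2 - C))) :
    (uj ≠ ujm →
      1 - (C / 2) * ((ujp - uj) / (uj - ujm) + 1) < 0 ∨
        (C / 2) * ((ujp - uj) / (uj - ujm) + 1) < 0) ∧
    (uj = ujm → ujp ≠ uj →
      uj - (C / 2) * (ujp - ujm) ∉ Set.Icc (min ujm uj) (max ujm uj)) := by
  obtain ⟨hC0, hC1⟩ := hC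
  obtain ⟨hθ1, hθ2⟩ := hθ
  have h2C : (0:ℝ) < 2 - C := by linarith
  have hd : ujp - uj ≠ 0 := sub_ne_zero.mpr hne
  constructor
  · intro hne2
    have he : uj - ujm ≠ 0 := sub_ne_zero.mpr hne2
    set θ : ℝ := (uj - ujm) / (ujp - uj) with hθdef
    have hθne : θ ≠ 0 := div_ne_zero he hd
    have hrw : (ujp - uj) / (uj - ujm) = θ⁻¹ := by
      rw [hθdef, inv_div]
    rw [hrw]
    have hinv : θ * θ⁻¹ = 1 := mul_inv_cancel₀ hθne
    rcases lt_or_gt_of_ne hθne with hneg | hpos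
    · right
      have h1 : θ⁻¹ + 1 = (1 + θ) / θ := by field_simp
      have h2 : (1 + θ) / θ < 0 := div_neg_of_pos_of_neg (by linarith) hneg
      have : θ⁻¹ + 1 < 0 := by rw [h1]; exact h2
      have hC2 : 0 < C / 2 := by linarith
      exact mul_neg_of_pos_of_neg hC2 this
    · left
      have h3 : θ * (2 - C) < C := (lt_div_iff₀ h2C).mp hθ2
      nlinarith [hinv, hpos, hC0]
  · intro h1 h2
    subst h1
    simp only [Set.mem_Icc, min_self, max_self, not_and, not_le]
    intro ha
    by_contra hb
    push_neg at hb
    have : C / 2 * (ujp - uj) = 0 := by linarith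
    have : ujp - uj = 0 := by
      rcases mul_eq_zero.mp this with h | h
      · linarith
      · exact h
    exact h2 (by linarith)
end

section
/- Let λ > 0 and let a₋, a₊ > 0 with λa₋ < 2 and λa₊ ≤ 1. Let u_{j-1}, u_j, u_{j+1} be reals with u_{j+1} ≠ u_j, and set θ = (u_j - u_{j-1})/(u_{j+1} - u_j). If θ ≤ -a₊/a₋ or θ ≥ λa₊/(2 - λa₋), then the nonlinear FTCS update v = u_j - (λ/2)(a₊(u_{j+1}-u_j) + a₋(u_j-u_{j-1})) satisfies min(u_{j-1}, u_j) ≤ v ≤ max(u_{j-1}, u_j). -/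
theorem nonlinear_ftcs_stable_region_pos
    (l am ap ujm uj ujp : ℝ) (hl : 0 < l) (ham : 0 < am) (hap : 0 < ap)
    (hm2 : l * am < 2) (hp1 : l * ap ≤ 1) (hne : ujp ≠ uj)
    (hθ : (uj - ujm) / (ujp - uj) ≤ -(ap / am) ∨
          (uj - ujm) / (ujp - uj) ≥ l * ap / (2 - l * am)) :
    min ujm uj ≤ uj - (l / 2) * (ap * (ujp - uj) + am * (uj - ujm)) ∧
      uj - (l / 2) * (ap * (ujp - uj) + am * (uj - ujm)) ≤ max ujm uj := by
  have hd : ujp - uj ≠ 0 := sub_ne_zero.mpr hne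
  have h2m : 0 < 2 - l * am := by linarith
  rcases hd.lt_or_gt with hdneg | hdpos
  · rcases hθ with h | h
    · -- d < 0, am e ≥ -ap d, e > 0
      have h' : -(ap / am) * (ujp - uj) ≤ (uj - ujm) := by
        rwa [div_le_iff_of_neg hdneg] at h
      have hA : -(ap * (ujp - uj)) ≤ am * (uj - ujm) := by
        have h2 := mul_le_mul_of_nonneg_left h' ham.le
        have : am * (-(ap / am) * (ujp - uj)) = -(ap * (ujp - uj)) := by
          field_simp
        linarith [this ▸ h2]
      have hepos : 0 < uj - ujm := by
        nlinarith [mul_pos hap (show 0 < -(ujp - uj) by linarith)]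
      rw [min_eq_left (by linarith), max_eq_right (by linarith)]
      constructor
      · nlinarith [mul_nonneg hl.le (show 0 ≤ am * (uj - ujm) + ap * (ujp - uj) by linarith),
          mul_pos (mul_pos hl ham) hepos]
      · nlinarith
    · -- d < 0, e(2 - l am) ≤ l ap d, e < 0
      have h' : (uj - ujm) ≤ l * ap / (2 - l * am) * (ujp - uj) := by
        rwa [ge_iff_le, le_div_iff_of_neg hdneg] at h
      have hB : (uj - ujm) * (2 - l * am) ≤ l * ap * (ujp - uj) := by
        have h2 := mul_le_mul_of_nonneg_right h' h2m.le
        have : l * ap / (2 - l * am) * (ujp - uj) * (2 - l * am)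
            = l * ap * (ujp - uj) := by field_simp
        linarith [this ▸ h2]
      have heneg : uj - ujm < 0 := by
        nlinarith [mul_pos (mul_pos hl hap) (show 0 < -(ujp - uj) by linarith)]
      rw [min_eq_right (by linarith), max_eq_left (by linarith)]
      constructor
      · nlinarith [mul_pos (mul_pos hl hap) (show 0 < -(ujp - uj) by linarith),
          mul_pos (mul_pos hl ham) (show 0 < -(uj - ujm) by linarith)]
      · nlinarith
  · rcases hθ with h | h
    · -- d > 0, am e ≤ -ap d, e < 0
      have h' : (uj - ujm) ≤ -(ap / am) * (ujp - uj) := by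
        rwa [div_le_iff₀ hdpos] at h
      have hA : am * (uj - ujm) ≤ -(ap * (ujp - uj)) := by
        have h2 := mul_le_mul_of_nonneg_left h' ham.le
        have : am * (-(ap / am) * (ujp - uj)) = -(ap * (ujp - uj)) := by
          field_simp
        linarith [this ▸ h2]
      have heneg : uj - ujm < 0 := by
        nlinarith [mul_pos hap hdpos]
      rw [min_eq_right (by linarith), max_eq_left (by linarith)]
      constructor
      · nlinarith
      · nlinarith [mul_pos (mul_pos hl ham) (show 0 < -(uj - ujm) by linarith)]
    · -- d > 0, e(2 - l am) ≥ l ap d, e > 0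
      have hB : l * ap * (ujp - uj) ≤ (uj - ujm) * (2 - l * am) := by
        rwa [ge_iff_le, div_le_div_iff₀ h2m hdpos] at h
      have hepos : 0 < uj - ujm := by
        nlinarith [mul_pos (mul_pos hl hap) hdpos]
      rw [min_eq_left (by linarith), max_eq_right (by linarith)]
      constructor
      · nlinarith
      · nlinarith [mul_pos (mul_pos hl hap) hdpos,
          mul_pos (mul_pos hl ham) hepos]
end

section
/- Let λ > 0 and let a₋, a₊ < 0 with λ|a₊| < 2 and λ|a₋| ≤ 1. Let u_{j-1}, u_j, u_{j+1} be reals with u_j ≠ u_{j-1}, and set θ = (u_{j+1} - u_j)/(u_j - u_{j-1}). If θ ≤ -a₋/a₊ or θ ≥ -λa₋/(2 + λa₊), then the nonlinear FTCS update v = u_j - (λ/2)(a₊(u_{j+1}-u_j) + a₋(u_j-u_{j-1})) satisfies min(u_j, u_{j+1}) ≤ v ≤ max(u_j, u_{j+1}). -/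
theorem nonlinear_ftcs_stable_region_neg
    (l am ap ujm uj ujp : ℝ) (hl : 0 < l) (ham : am < 0) (hap : ap < 0)
    (hp2 : l * |ap| < 2) (hm1 : l * |am| ≤ 1) (hne : uj ≠ ujm)
    (hθ : (ujp - uj) / (uj - ujm) ≤ -(am / ap) ∨
          (ujp - uj) / (uj - ujm) ≥ -(l * am) / (2 + l * ap)) :
    min uj ujp ≤ uj - (l / 2) * (ap * (ujp - uj) + am * (uj - ujm)) ∧
      uj - (l / 2) * (ap * (ujp - uj) + am * (uj - ujm)) ≤ max uj ujp := by
  have hap0 : ap ≠ 0 := ne_of_lt hap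
  have h2 : (0:ℝ) < 2 + l * ap := by rw [abs_of_neg hap] at hp2; linarith
  have hd0 : uj - ujm ≠ 0 := sub_ne_zero.mpr hne
  rcases hd0.lt_or_gt with hdlt | hdgt
  · -- d < 0
    have hmd : 0 < am * (uj - ujm) := mul_pos_of_neg_of_neg ham hdlt
    rcases hθ with hA | hB
    · -- case A, d < 0 : ap*e + am*d ≤ 0, e > 0
      rw [div_le_iff_of_neg hdlt] at hA
      have hkey : ap * (ujp - uj) + am * (uj - ujm) ≤ 0 := by
        have h := mul_le_mul_of_nonpos_left hA (le_of_lt hap)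
        have heq : ap * (-(am / ap) * (uj - ujm)) = -(am * (uj - ujm)) := by
          field_simp
        nlinarith [h, heq]
      have he : 0 < ujp - uj := by nlinarith
      constructor
      · refine le_trans (min_le_left _ _) ?_
        nlinarith
      · refine le_trans ?_ (le_max_right _ _)
        nlinarith [mul_pos h2 he, mul_pos hl hmd]
    · -- case B, d < 0 : (2+l*ap)*e + l*am*d ≤ 0, e < 0
      rw [ge_iff_le, le_div_iff_of_neg hdlt] at hB
      have hkey : (2 + l * ap) * (ujp - uj) + l * (am * (uj - ujm)) ≤ 0 := by
        have h := mul_le_mul_of_nonneg_left hB (le_of_lt h2)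
        have heq : (2 + l * ap) * (-(l * am) / (2 + l * ap) * (uj - ujm)) =
            -(l * (am * (uj - ujm))) := by
          field_simp
        nlinarith [h, heq]
      have he : ujp - uj < 0 := by nlinarith [mul_pos hl hmd]
      constructor
      · refine le_trans (min_le_right _ _) ?_
        nlinarith
      · refine le_trans ?_ (le_max_left _ _)
        nlinarith [mul_pos_of_neg_of_neg hap he, mul_pos hl hmd]
  · -- d > 0
    have hmd : am * (uj - ujm) < 0 := mul_neg_of_neg_of_pos ham hdgt
    rcases hθ with hA | hB
    · -- case A, d > 0 : ap*e + am*d ≥ 0, e < 0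
      rw [div_le_iff₀ hdgt] at hA
      have hkey : 0 ≤ ap * (ujp - uj) + am * (uj - ujm) := by
        have h := mul_le_mul_of_nonpos_left hA (le_of_lt hap)
        have heq : ap * (-(am / ap) * (uj - ujm)) = -(am * (uj - ujm)) := by
          field_simp
        nlinarith [h, heq]
      have he : ujp - uj < 0 := by nlinarith
      constructor
      · refine le_trans (min_le_right _ _) ?_
        nlinarith [mul_pos h2 (neg_pos.mpr he), mul_pos hl (neg_pos.mpr hmd)]
      · refine le_trans ?_ (le_max_left _ _)
        nlinarith
    · -- case B, d > 0 : (2+l*ap)*e + l*am*d ≥ 0, e > 0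
      rw [ge_iff_le, div_le_div_iff₀ h2 hdgt] at hB
      -- hB : -(l*am) * (uj - ujm) ≤ (ujp - uj) * (2 + l*ap)
      have hkey : 0 ≤ (2 + l * ap) * (ujp - uj) + l * (am * (uj - ujm)) := by
        nlinarith [hB]
      have he : 0 < ujp - uj := by nlinarith [mul_pos hl (neg_pos.mpr hmd)]
      constructor
      · refine le_trans (min_le_left _ _) ?_
        nlinarith [mul_pos_of_neg_of_neg hap (neg_lt_zero.mpr he), mul_pos hl (neg_pos.mpr hmd)]
      · refine le_trans ?_ (le_max_right _ _)
        nlinarith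
end

section
/- Let C ∈ (0,1] and let (u_j)_{j∈ℤ} be a bounded monotone nonincreasing (or nondecreasing) sequence such that for every j with u_{j+1} ≠ u_j, the ratio θ_j = (u_j - u_{j-1})/(u_{j+1} - u_j) satisfies θ_j ≥ C/(2-C), and whenever u_{j+1} = u_j also u_j = u_{j-1}. Then the FTCS-updated sequence v_j = u_j - (C/2)(u_{j+1} - u_{j-1}) satisfies inf_k u_k ≤ v_j ≤ sup_k u_k for all j, i.e., one FTCS step preserves the global bounds (maximum principle) on such data. -/
theorem ftcs_global_maximum_principle
    (C : ℝ) (hC : C ∈ Set.Ioc (0:ℝ) 1) (u : ℤ → ℝ)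
    (hbdd : BddAbove (Set.range u) ∧ BddBelow (Set.range u))
    (hmono : Antitone u ∨ Monotone u)
    (hθ : ∀ j : ℤ, u (j + 1) ≠ u j →
      (u j - u (j - 1)) / (u (j + 1) - u j) ≥ C / (2 - C))
    (hdeg : ∀ j : ℤ, u (j + 1) = u j → u j = u (j - 1)) :
    ∀ j : ℤ,
      sInf (Set.range u) ≤ u j - (C / 2) * (u (j + 1) - u (j - 1)) ∧
        u j - (C / 2) * (u (j + 1) - u (j - 1)) ≤ sSup (Set.range u) := by
  obtain ⟨hbA, hbB⟩ := hbdd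
  obtain ⟨hCpos, hC1⟩ := hC
  have h2C : (0:ℝ) < 2 - C := by linarith
  intro j
  have hinf : ∀ k : ℤ, sInf (Set.range u) ≤ u k := fun k => csInf_le hbB ⟨k, rfl⟩
  have hsup : ∀ k : ℤ, u k ≤ sSup (Set.range u) := fun k => le_csSup hbA ⟨k, rfl⟩
  by_cases h : u (j + 1) = u j
  · have h2 := hdeg j h
    have : u j - (C / 2) * (u (j + 1) - u (j - 1)) = u j := by
      rw [h, ← h2]; ring
    rw [this]
    exact ⟨hinf j, hsup j⟩
  · have hθj := hθ j h
    rcases hmono with hm | hm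
    · -- antitone: d+ < 0, d- ≤ 0
      have hdp : u (j + 1) - u j < 0 := by
        have := hm (show j ≤ j + 1 by linarith)
        have hne : u (j + 1) ≠ u j := h
        cases lt_or_eq_of_le this with
        | inl h' => linarith
        | inr h' => exact absurd h' hne
      have hdm : u j - u (j - 1) ≤ 0 := by
        have := hm (show j - 1 ≤ j by linarith)
        linarith
      have key : u j - u (j - 1) ≤ C / (2 - C) * (u (j + 1) - u j) :=
        (le_div_iff_of_neg hdp).mp hθj
      have key2 : (2 - C) * (u j - u (j - 1)) ≤ C * (u (j + 1) - u j) := by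
        have := mul_le_mul_of_nonneg_left key (le_of_lt h2C)
        calc (2 - C) * (u j - u (j - 1)) ≤ (2 - C) * (C / (2 - C) * (u (j + 1) - u j)) := this
          _ = C * (u (j + 1) - u j) := by field_simp
      constructor
      · -- sInf ≤ u j ≤ v
        have : u j ≤ u j - (C / 2) * (u (j + 1) - u (j - 1)) := by nlinarith
        linarith [hinf j]
      · -- v ≤ u (j-1) ≤ sSup
        have : u j - (C / 2) * (u (j + 1) - u (j - 1)) ≤ u (j - 1) := by nlinarith
        linarith [hsup (j - 1)]
    · -- monotone: d+ > 0, d- ≥ 0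
      have hdp : 0 < u (j + 1) - u j := by
        have := hm (show j ≤ j + 1 by linarith)
        have hne : u (j + 1) ≠ u j := h
        cases lt_or_eq_of_le this with
        | inl h' => linarith
        | inr h' => exact absurd h' (fun e => hne e.symm)
      have hdm : 0 ≤ u j - u (j - 1) := by
        have := hm (show j - 1 ≤ j by linarith)
        linarith
      have key : C / (2 - C) * (u (j + 1) - u j) ≤ u j - u (j - 1) :=
        (le_div_iff₀ hdp).mp hθj
      have key2 : C * (u (j + 1) - u j) ≤ (2 - C) * (u j - u (j - 1)) := by
        have := mul_le_mul_of_nonneg_left key (le_of_lt h2C)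
        calc C * (u (j + 1) - u j) = (2 - C) * (C / (2 - C) * (u (j + 1) - u j)) := by field_simp
          _ ≤ (2 - C) * (u j - u (j - 1)) := this
      constructor
      · have : u (j - 1) ≤ u j - (C / 2) * (u (j + 1) - u (j - 1)) := by nlinarith
        linarith [hinf (j - 1)]
      · have : u j - (C / 2) * (u (j + 1) - u (j - 1)) ≤ u j := by nlinarith
        linarith [hsup j]
end

section
/- Let C ∈ (0,1] and let u_{j-1}, u_j, u_{j+1} be reals with u_{j+1} ≠ u_j, u_j ≠ u_{j-1}, and (u_j - u_{j-1})/(u_{j+1} - u_j) ≤ -1 (a local extremum with backward gradient at least as large in magnitude as forward, of opposite sign). Then the FTCS update v = u_j - (C/2)(u_{j+1} - u_{j-1}) lies between u_{j-1} and u_j. -/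
theorem ftcs_extremum_branch_bounds
    (C ujm uj ujp : ℝ) (hC : C ∈ Set.Ioc (0:ℝ) 1)
    (hne : ujp ≠ uj) (hne' : uj ≠ ujm)
    (hθ : (uj - ujm) / (ujp - uj) ≤ -1) :
    min ujm uj ≤ uj - (C / 2) * (ujp - ujm) ∧
      uj - (C / 2) * (ujp - ujm) ≤ max ujm uj := by
  obtain ⟨hC0, hC1⟩ := hC
  have hd : ujp - uj ≠ 0 := sub_ne_zero.mpr hne
  rcases hd.lt_or_gt with h | h
  · -- ujp - uj < 0, so uj - ujm ≥ -(ujp - uj) > 0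
    have hb : -(ujp - uj) ≤ uj - ujm := by
      have := (div_le_iff_of_neg h).mp hθ
      linarith
    have h1 : ujm ≤ uj - (C / 2) * (ujp - ujm) := by nlinarith
    have h2 : uj - (C / 2) * (ujp - ujm) ≤ uj := by nlinarith
    exact ⟨le_trans (min_le_left _ _) h1, le_trans h2 (le_max_right _ _)⟩
  · have hb : uj - ujm ≤ -(ujp - uj) := by
      have := (div_le_iff₀ h).mp hθ
      linarith
    have h1 : uj ≤ uj - (C / 2) * (ujp - ujm) := by nlinarith
    have h2 : uj - (C / 2) * (ujp - ujm) ≤ ujm := by nlinarith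
    exact ⟨le_trans (min_le_right _ _) h1, le_trans h2 (le_max_left _ _)⟩
end
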